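/- arXiv:2101.09519 — 2 statements merged into one kernel-verified Lean document; each statement's English description precedes it below -/
import Mathlib

section
/- Assume (ii) |f(t,u,v)| ≤ M for all (t,u,v) ∈ D_M; (iii) f satisfies the Lipschitz conditions |f(t,u2,v2) − f(t,u1,v1)| ≤ L1|u2 − u1| + L2|v2 − v1| for all (t,u1,v1), (t,u2,v2) ∈ D_M with constants L1, L2 ≥ 0; and (iv) q := (L1 + L2) M0 < 1. Then there exists exactly one continuous function u: [0,a] → ℝ satisfying |u(t)| ≤ ‖g‖ + M0 M for all t ∈ [0,a] and the integral equation u(t) = g(t) + ∫₀ᵃ G(t,s) f(s, u(s), u(φ(s))) ds for all t ∈ [0,a]. -/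
open Set MeasureTheory

/-!
On the closed ball of radius `‖g‖ + M0 M` in `C([0,a])` the right-hand side of the equation is
a self-map by the bound (ii), and a contraction with constant `(L1 + L2) M0 < 1` by the
Lipschitz condition (iii), since `∫₀ᵃ |G(t,s)| ds ≤ M0`. The ball is complete, so Banach's
fixed point theorem gives exactly one solution in it.
-/

section FixedPoint

variable {X E : Type*} [TopologicalSpace X] [NormedAddCommGroup E]

def closedBallOn (S : Set X) (R : ℝ) : Set (X → E) :=
  {u | ContinuousOn u S ∧ ∀ x ∈ S, ‖u x‖ ≤ R}

theorem exists_unique_eqOn_of_contracting_closedBallOn [CompleteSpace E] {S : Set X}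
    (hS : IsCompact S) {R : ℝ} (hR : 0 ≤ R) {K : NNReal} (hK : K < 1) {T : (X → E) → X → E}
    (hT_local : ∀ u v, EqOn u v S → EqOn (T u) (T v) S)
    (hT_mapsTo : MapsTo T (closedBallOn S R) (closedBallOn S R))
    (hT_lip : ∀ u ∈ closedBallOn S R, ∀ v ∈ closedBallOn S R, ∀ D, 0 ≤ D →
      (∀ x ∈ S, ‖u x - v x‖ ≤ D) → ∀ x ∈ S, ‖T u x - T v x‖ ≤ K * D) :
    ∃ u ∈ closedBallOn S R, EqOn u (T u) S ∧
      ∀ v ∈ closedBallOn S R, EqOn v (T v) S → EqOn v u S := by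
  have := isCompact_iff_compactSpace.mp hS
  let B := Metric.closedBall (0 : C(S, E)) R
  have : CompleteSpace B := Metric.isClosed_closedBall.completeSpace_coe
  have : Nonempty B := ⟨⟨0, Metric.mem_closedBall_self hR⟩⟩
  let restrict (u : X → E) (hu : u ∈ closedBallOn S R) : B :=
    ⟨⟨S.domRestrict u, hu.1.domRestrict⟩, mem_closedBall_zero_iff.2 <|
      (ContinuousMap.norm_le _ hR).2 fun x => hu.2 x x.2⟩
  -- `T` only sees values on `S`, so an element of `C(S, E)` may be extended by zero.
  let extend (w : B) : X → E := Function.extend Subtype.val (w : C(S, E)) 0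
  have extend_apply (w : B) (x : S) : extend w x = (w : C(S, E)) x :=
    Subtype.val_injective.extend_apply _ _ x
  have extend_mem (w : B) : extend w ∈ closedBallOn S R := by
    refine ⟨continuousOn_iff_continuous_domRestrict.2 ?_, fun x hx => ?_⟩
    · convert (w : C(S, E)).continuous
      ext x; exact extend_apply w x
    · rw [extend_apply w ⟨x, hx⟩]
      exact (ContinuousMap.norm_le _ hR).1 (mem_closedBall_zero_iff.1 w.2) _
  let Φ (w : B) : B := restrict (T (extend w)) (hT_mapsTo (extend_mem w))
  have hΦ : ContractingWith K Φ := by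
    refine ⟨hK, LipschitzWith.of_dist_le_mul fun w₁ w₂ => ?_⟩
    refine (ContinuousMap.dist_le (by positivity)).2 fun x => ?_
    rw [dist_eq_norm]
    refine hT_lip _ (extend_mem w₁) _ (extend_mem w₂) _ dist_nonneg (fun y hy => ?_) x x.2
    rw [extend_apply w₁ ⟨y, hy⟩, extend_apply w₂ ⟨y, hy⟩, ← dist_eq_norm]
    exact ContinuousMap.dist_apply_le_dist (f := (w₁ : C(S, E))) _
  set w := ContractingWith.fixedPoint Φ hΦ
  refine ⟨extend w, extend_mem w, fun x hx => ?_, fun v hv hTv x hx => ?_⟩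
  · have hw : (Φ w : C(S, E)) ⟨x, hx⟩ = (w : C(S, E)) ⟨x, hx⟩ :=
      congrArg (fun w : B => (w : C(S, E)) ⟨x, hx⟩) hΦ.fixedPoint_isFixedPt
    exact (extend_apply w ⟨x, hx⟩).trans hw.symm
  · have hv_fixed : Function.IsFixedPt Φ (restrict v hv) := by
      refine Subtype.ext (ContinuousMap.ext fun y => ?_)
      refine (hT_local _ _ (fun z hz => ?_) y.2).trans (hTv y.2).symm
      exact extend_apply _ ⟨z, hz⟩
    have hvw : restrict v hv = w := hΦ.fixedPoint_unique hv_fixed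
    rw [extend_apply w ⟨x, hx⟩, ← hvw]
    rfl

end FixedPoint

theorem abs_intervalIntegral_mul_le {k h : ℝ → ℝ} {a b C : ℝ} (hab : a ≤ b)
    (hk : IntervalIntegrable k volume a b) (hh : ∀ s ∈ Icc a b, |h s| ≤ C) :
    |∫ s in a..b, k s * h s| ≤ (∫ s in a..b, |k s|) * C := by
  rw [← Real.norm_eq_abs, ← intervalIntegral.integral_mul_const]
  refine intervalIntegral.norm_integral_le_of_norm_le hab (ae_of_all _ fun s hs => ?_)
    (hk.abs.mul_const C)
  rw [Real.norm_eq_abs, abs_mul]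
  exact mul_le_mul_of_nonneg_left (hh s (Ioc_subset_Icc_self hs)) (abs_nonneg _)

theorem continuousOn_intervalIntegral_of_continuousOn {E : Type*} [NormedAddCommGroup E]
    [NormedSpace ℝ E] {k : ℝ → ℝ → E} {a b c d : ℝ} (hab : a ≤ b) (hcd : c ≤ d)
    (hk : ContinuousOn (fun p : ℝ × ℝ => k p.1 p.2) (Icc c d ×ˢ Icc a b)) :
    ContinuousOn (fun t => ∫ s in a..b, k t s) (Icc c d) := by
  -- Composing with the projections onto the intervals makes `k` continuous everywhere without
  -- changing the integrals over `[a, b]` for `t ∈ [c, d]`.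
  have hk' : Continuous fun z : ℝ × ℝ => k (projIcc c d hcd z.1) (projIcc a b hab z.2) :=
    hk.comp_continuous
      (f := fun z : ℝ × ℝ => ((projIcc c d hcd z.1 : ℝ), (projIcc a b hab z.2 : ℝ))) (by fun_prop)
      fun z => ⟨(projIcc c d hcd z.1).2, (projIcc a b hab z.2).2⟩
  refine (intervalIntegral.continuous_parametric_intervalIntegral_of_continuous'
      (f := fun t s => k (projIcc c d hcd t) (projIcc a b hab s)) hk' a b)
    |>.continuousOn.congr fun t ht => intervalIntegral.integral_congr fun s hs => ?_
  rw [uIcc_of_le hab] at hs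
  simp only [projIcc_of_mem hcd ht, projIcc_of_mem hab hs]

theorem ContinuousOn.comp_deviating {S : Set ℝ} {f : ℝ → ℝ → ℝ → ℝ} {φ u : ℝ → ℝ}
    (hf : ContinuousOn (fun p : ℝ × ℝ × ℝ => f p.1 p.2.1 p.2.2) (S ×ˢ univ ×ˢ univ))
    (hφ : ContinuousOn φ S) (hφS : MapsTo φ S S) (hu : ContinuousOn u S) :
    ContinuousOn (fun s => f s (u s) (u (φ s))) S :=
  hf.comp (continuousOn_id.prodMk (hu.prodMk (hu.comp hφ hφS))) fun _ hs =>
    ⟨hs, mem_univ _, mem_univ _⟩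

noncomputable def hammersteinOp (a : ℝ) (g : ℝ → ℝ) (G : ℝ → ℝ → ℝ) (f : ℝ → ℝ → ℝ → ℝ) (φ : ℝ → ℝ)
    (u : ℝ → ℝ) (t : ℝ) : ℝ :=
  g t + ∫ s in (0:ℝ)..a, G t s * f s (u s) (u (φ s))

section Hammerstein

variable {a : ℝ} {g : ℝ → ℝ} {G : ℝ → ℝ → ℝ} {f : ℝ → ℝ → ℝ → ℝ} {φ u v : ℝ → ℝ}

theorem hammersteinOp_congr (ha : 0 ≤ a) (hφ : MapsTo φ (Icc 0 a) (Icc 0 a))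
    (huv : EqOn u v (Icc 0 a)) (t : ℝ) :
    hammersteinOp a g G f φ u t = hammersteinOp a g G f φ v t := by
  refine congrArg (g t + ·) (intervalIntegral.integral_congr fun s hs => ?_)
  rw [uIcc_of_le ha] at hs
  simp only [huv hs, huv (hφ hs)]

theorem continuousOn_hammersteinOp (ha : 0 ≤ a) (hg : ContinuousOn g (Icc 0 a))
    (hG : ContinuousOn (fun p : ℝ × ℝ => G p.1 p.2) (Icc 0 a ×ˢ Icc 0 a))
    (hu : ContinuousOn (fun s => f s (u s) (u (φ s))) (Icc 0 a)) :
    ContinuousOn (hammersteinOp a g G f φ u) (Icc 0 a) :=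
  hg.add <| continuousOn_intervalIntegral_of_continuousOn ha ha <|
    hG.mul (hu.comp continuousOn_snd fun _ hz => hz.2)

theorem abs_hammersteinOp_le {M t : ℝ} (ha : 0 ≤ a) (hG : IntervalIntegrable (G t) volume 0 a)
    (hu : ∀ s ∈ Icc 0 a, |f s (u s) (u (φ s))| ≤ M) :
    |hammersteinOp a g G f φ u t| ≤ |g t| + (∫ s in (0:ℝ)..a, |G t s|) * M :=
  (abs_add_le _ _).trans (add_le_add le_rfl (abs_intervalIntegral_mul_le ha hG hu))

theorem abs_hammersteinOp_sub_le {D t : ℝ} (ha : 0 ≤ a) (hG : ContinuousOn (G t) (Icc 0 a))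
    (hu : ContinuousOn (fun s => f s (u s) (u (φ s))) (Icc 0 a))
    (hv : ContinuousOn (fun s => f s (v s) (v (φ s))) (Icc 0 a))
    (huv : ∀ s ∈ Icc 0 a, |f s (u s) (u (φ s)) - f s (v s) (v (φ s))| ≤ D) :
    |hammersteinOp a g G f φ u t - hammersteinOp a g G f φ v t| ≤
      (∫ s in (0:ℝ)..a, |G t s|) * D := by
  rw [← uIcc_of_le ha] at hG hu hv
  have hGu : IntervalIntegrable (fun s => G t s * f s (u s) (u (φ s))) volume 0 a :=
    (hG.mul hu).intervalIntegrable
  have hGv : IntervalIntegrable (fun s => G t s * f s (v s) (v (φ s))) volume 0 a :=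
    (hG.mul hv).intervalIntegrable
  rw [hammersteinOp, hammersteinOp, add_sub_add_left_eq_sub,
    ← intervalIntegral.integral_sub hGu hGv]
  simp only [← mul_sub]
  exact abs_intervalIntegral_mul_le ha hG.intervalIntegrable huv

theorem mapsTo_hammersteinOp_closedBallOn {ng M0 M : ℝ} (ha : 0 ≤ a)
    (hg : ContinuousOn g (Icc 0 a))
    (hG : ContinuousOn (fun p : ℝ × ℝ => G p.1 p.2) (Icc 0 a ×ˢ Icc 0 a))
    (hf : ContinuousOn (fun p : ℝ × ℝ × ℝ => f p.1 p.2.1 p.2.2) (Icc 0 a ×ˢ univ ×ˢ univ))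
    (hφc : ContinuousOn φ (Icc 0 a)) (hφ : MapsTo φ (Icc 0 a) (Icc 0 a))
    (hng : ∀ t ∈ Icc 0 a, |g t| ≤ ng) (hM0 : ∀ t ∈ Icc 0 a, ∫ s in (0:ℝ)..a, |G t s| ≤ M0)
    (hM : 0 ≤ M) (hbound : ∀ t ∈ Icc 0 a, ∀ x y : ℝ,
      |x| ≤ ng + M0 * M → |y| ≤ ng + M0 * M → |f t x y| ≤ M) :
    MapsTo (hammersteinOp a g G f φ) (closedBallOn (Icc 0 a) (ng + M0 * M))
      (closedBallOn (Icc 0 a) (ng + M0 * M)) := by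
  intro u hu
  refine ⟨continuousOn_hammersteinOp ha hg hG (hf.comp_deviating hφc hφ hu.1), fun t ht => ?_⟩
  calc |hammersteinOp a g G f φ u t|
      ≤ |g t| + (∫ s in (0:ℝ)..a, |G t s|) * M :=
        abs_hammersteinOp_le ha ((hG.uncurry_left t ht).intervalIntegrable_of_Icc ha)
          fun s hs => hbound s hs _ _ (hu.2 s hs) (hu.2 _ (hφ hs))
    _ ≤ ng + M0 * M := by gcongr <;> [exact hng t ht; exact hM0 t ht]

theorem norm_hammersteinOp_sub_le_of_lipschitz {R M0 L1 L2 D : ℝ} (ha : 0 ≤ a)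
    (hG : ContinuousOn (fun p : ℝ × ℝ => G p.1 p.2) (Icc 0 a ×ˢ Icc 0 a))
    (hf : ContinuousOn (fun p : ℝ × ℝ × ℝ => f p.1 p.2.1 p.2.2) (Icc 0 a ×ˢ univ ×ˢ univ))
    (hφc : ContinuousOn φ (Icc 0 a)) (hφ : MapsTo φ (Icc 0 a) (Icc 0 a))
    (hM0 : ∀ t ∈ Icc 0 a, ∫ s in (0:ℝ)..a, |G t s| ≤ M0) (hL1 : 0 ≤ L1) (hL2 : 0 ≤ L2)
    (hLip : ∀ t ∈ Icc 0 a, ∀ x₁ x₂ y₁ y₂ : ℝ, |x₁| ≤ R → |x₂| ≤ R → |y₁| ≤ R → |y₂| ≤ R →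
      |f t x₂ y₂ - f t x₁ y₁| ≤ L1 * |x₂ - x₁| + L2 * |y₂ - y₁|)
    (hu : u ∈ closedBallOn (Icc 0 a) R) (hv : v ∈ closedBallOn (Icc 0 a) R) (hD : 0 ≤ D)
    (huv : ∀ s ∈ Icc 0 a, ‖u s - v s‖ ≤ D) {t : ℝ} (ht : t ∈ Icc 0 a) :
    ‖hammersteinOp a g G f φ u t - hammersteinOp a g G f φ v t‖ ≤ (L1 + L2) * M0 * D := by
  have hf_sub : ∀ s ∈ Icc 0 a,
      |f s (u s) (u (φ s)) - f s (v s) (v (φ s))| ≤ (L1 + L2) * D := fun s hs =>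
    calc _ ≤ L1 * |u s - v s| + L2 * |u (φ s) - v (φ s)| :=
          hLip s hs _ _ _ _ (hv.2 s hs) (hu.2 s hs) (hv.2 _ (hφ hs)) (hu.2 _ (hφ hs))
      _ ≤ L1 * D + L2 * D := by gcongr <;> [exact huv s hs; exact huv _ (hφ hs)]
      _ = (L1 + L2) * D := by ring
  calc |hammersteinOp a g G f φ u t - hammersteinOp a g G f φ v t|
      ≤ (∫ s in (0:ℝ)..a, |G t s|) * ((L1 + L2) * D) :=
        abs_hammersteinOp_sub_le ha (hG.uncurry_left t ht) (hf.comp_deviating hφc hφ hu.1)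
          (hf.comp_deviating hφc hφ hv.1) hf_sub
    _ ≤ M0 * ((L1 + L2) * D) := by gcongr; exact hM0 t ht
    _ = (L1 + L2) * M0 * D := by ring

end Hammerstein

/-- Under the boundedness, Lipschitz and contraction (`q = (L1+L2) M0 < 1`) assumptions, there
exists exactly one continuous `u : [0,a] → ℝ` with `|u(t)| ≤ ‖g‖ + M0 M` satisfying the
integral equation `u(t) = g(t) + ∫₀ᵃ G(t,s) f(s, u(s), u(φ(s))) ds` on `[0,a]`. -/
theorem existence_uniqueness_integral_equation
    (a : ℝ) (ha : 0 < a)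
    (φ : ℝ → ℝ) (hφc : ContinuousOn φ (Icc 0 a)) (hφm : MapsTo φ (Icc 0 a) (Icc 0 a))
    (G : ℝ → ℝ → ℝ)
    (hG : ContinuousOn (fun p : ℝ × ℝ => G p.1 p.2) (Icc 0 a ×ˢ Icc 0 a))
    (g : ℝ → ℝ) (hg : ContinuousOn g (Icc 0 a))
    (M0 : ℝ) (hM0 : IsGreatest ((fun t => ∫ s in (0:ℝ)..a, |G t s|) '' Icc 0 a) M0)
    (ng : ℝ) (hng : IsGreatest ((fun t => |g t|) '' Icc 0 a) ng)
    (f : ℝ → ℝ → ℝ → ℝ)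
    (hfc : ContinuousOn (fun p : ℝ × ℝ × ℝ => f p.1 p.2.1 p.2.2)
      (Icc 0 a ×ˢ (univ : Set ℝ) ×ˢ (univ : Set ℝ)))
    (M : ℝ) (hM : 0 < M)
    (hbound : ∀ t ∈ Icc (0:ℝ) a, ∀ u v : ℝ,
      |u| ≤ ng + M0 * M → |v| ≤ ng + M0 * M → |f t u v| ≤ M)
    (L1 L2 : ℝ) (hL1 : 0 ≤ L1) (hL2 : 0 ≤ L2)
    (hLip : ∀ t ∈ Icc (0:ℝ) a, ∀ u1 u2 v1 v2 : ℝ,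
      |u1| ≤ ng + M0 * M → |u2| ≤ ng + M0 * M →
      |v1| ≤ ng + M0 * M → |v2| ≤ ng + M0 * M →
      |f t u2 v2 - f t u1 v1| ≤ L1 * |u2 - u1| + L2 * |v2 - v1|)
    (hq : (L1 + L2) * M0 < 1) :
    ∃ u : ℝ → ℝ,
      (ContinuousOn u (Icc 0 a) ∧
        (∀ t ∈ Icc (0:ℝ) a, |u t| ≤ ng + M0 * M) ∧
        (∀ t ∈ Icc (0:ℝ) a,
          u t = g t + ∫ s in (0:ℝ)..a, G t s * f s (u s) (u (φ s)))) ∧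
      ∀ u2 : ℝ → ℝ,
        (ContinuousOn u2 (Icc 0 a) ∧
          (∀ t ∈ Icc (0:ℝ) a, |u2 t| ≤ ng + M0 * M) ∧
          (∀ t ∈ Icc (0:ℝ) a,
            u2 t = g t + ∫ s in (0:ℝ)..a, G t s * f s (u2 s) (u2 (φ s)))) →
        EqOn u2 u (Icc 0 a) := by
  obtain ⟨⟨t₀, -, hM0_eq⟩, hM0_ge⟩ := hM0
  obtain ⟨⟨t₁, -, hng_eq⟩, hng_ge⟩ := hng
  have hM0_nonneg : 0 ≤ M0 :=
    hM0_eq ▸ intervalIntegral.integral_nonneg ha.le fun s _ => abs_nonneg _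
  have hng_nonneg : 0 ≤ ng := hng_eq ▸ abs_nonneg _
  obtain ⟨u, hu, hTu, hu_unique⟩ :=
    exists_unique_eqOn_of_contracting_closedBallOn isCompact_Icc (by positivity)
      (K := ⟨(L1 + L2) * M0, by positivity⟩) hq
      (fun _ _ huv t _ => hammersteinOp_congr ha.le hφm huv t)
      (mapsTo_hammersteinOp_closedBallOn ha.le hg hG hfc hφc hφm
        (fun t ht => hng_ge ⟨t, ht, rfl⟩) (fun t ht => hM0_ge ⟨t, ht, rfl⟩) hM.le hbound)
      (fun _ hu _ hv _ hD huv _ ht => norm_hammersteinOp_sub_le_of_lipschitz ha.le hG hfc hφc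
        hφm (fun t ht => hM0_ge ⟨t, ht, rfl⟩) hL1 hL2 hLip hu hv hD huv ht)
  exact ⟨u, ⟨hu.1, hu.2, hTu⟩, fun u₂ hu₂ => hu_unique u₂ ⟨hu₂.1, hu₂.2.1⟩ hu₂.2.2⟩
end

section
/- Let ψ: [0,1] → ℝ be twice continuously differentiable. Then there exists a constant C > 0 such that for every integer N ≥ 1, with h = 1/N, grid points s_j = j h, and trapezoidal weights ρ_0 = ρ_N = 1/2 and ρ_j = 1 for 1 ≤ j ≤ N − 1, one has for every ξ ∈ [0,1]: |∫₀¹ G(ξ, s) ψ(s) ds − Σ_{j=0}^{N} h ρ_j G(ξ, s_j) ψ(s_j)| ≤ C h². -/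
open Set MeasureTheory

/-!
For fixed `ξ` the integrand `f = G(ξ, ·) ψ` is `C¹` but not `C²` on `[0,1]`: `∂ₛG(ξ, s) =
ξ²/2 + min (s - ξ) 0` has a corner at `s = ξ`, so the classical error bound through `f''` is not
available. Integrating by parts against `s - m` (`m` the midpoint of a cell of length `h`) writes
the error of the trapezoidal rule on that cell as `∫ (f' s - f' m) (s - m) ds`, which is at most
`L h³ / 4` when `f'` is `L`-Lipschitz; summing over the `N` cells gives `L h² / 4`. Since `G`
and `∂ₛG` are bounded by `1` and `1`-Lipschitz on `[0,1]²` uniformly in `ξ`, the derivative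
`f' = ∂ₛG ψ + G ψ'` is Lipschitz with a constant that does not depend on `ξ`.
-/

/-- The Green function of the problem `u''' = ψ`, `u(0) = u'(0) = u'(1) = 0` on `[0,1]`. -/
noncomputable def G01 (t s : ℝ) : ℝ :=
  if s ≤ t then s / 2 * (t ^ 2 - 2 * t + s) else t ^ 2 / 2 * (s - 1)

/-- Trapezoidal weights: `ρ_0 = ρ_N = 1/2` and `ρ_j = 1` for `1 ≤ j ≤ N − 1`. -/
noncomputable def trapWeight (N j : ℕ) : ℝ := if j = 0 ∨ j = N then 1 / 2 else 1

open scoped NNReal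

theorem LipschitzOnWith.mul_of_norm_le {α R : Type*} [PseudoMetricSpace α] [SeminormedRing R]
    {f g : α → R} {s : Set α} {Kf Kg Bf Bg : ℝ≥0} (hf : LipschitzOnWith Kf f s)
    (hg : LipschitzOnWith Kg g s) (hfB : ∀ x ∈ s, ‖f x‖ ≤ Bf) (hgB : ∀ x ∈ s, ‖g x‖ ≤ Bg) :
    LipschitzOnWith (Bf * Kg + Kf * Bg) (fun x ↦ f x * g x) s := by
  refine LipschitzOnWith.of_dist_le_mul fun x hx y hy ↦ ?_
  have hfxy := hf.dist_le_mul x hx y hy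
  have hgxy := hg.dist_le_mul x hx y hy
  rw [dist_eq_norm] at hfxy hgxy ⊢
  calc ‖f x * g x - f y * g y‖ = ‖f x * (g x - g y) + (f x - f y) * g y‖ := by
        congr 1; noncomm_ring
    _ ≤ ‖f x‖ * ‖g x - g y‖ + ‖f x - f y‖ * ‖g y‖ :=
        (norm_add_le _ _).trans (add_le_add (norm_mul_le _ _) (norm_mul_le _ _))
    _ ≤ Bf * (Kg * dist x y) + Kf * dist x y * Bg :=
        add_le_add (mul_le_mul (hfB x hx) hgxy (norm_nonneg _) Bf.2)
          (mul_le_mul hfxy (hgB y hy) (norm_nonneg _) (by positivity))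
    _ = ↑(Bf * Kg + Kf * Bg) * dist x y := by push_cast; ring

theorem trapezoidal_error_one_eq_integral {f f' : ℝ → ℝ} {a b : ℝ} (hab : a ≤ b)
    (hf : ContinuousOn f (Icc a b)) (hderiv : ∀ x ∈ Ioo a b, HasDerivAt f (f' x) x)
    (hf' : IntervalIntegrable f' volume a b) :
    trapezoidal_error f 1 a b = ∫ s in a..b, (f' s - f' ((a + b) / 2)) * (s - (a + b) / 2) := by
  set m := (a + b) / 2
  have hparts : ∫ s in a..b, f s * 1 =
      f b * (b - m) - f a * (a - m) - ∫ s in a..b, f' s * (s - m) :=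
    intervalIntegral.integral_mul_deriv_eq_deriv_mul_of_hasDerivAt (by rwa [uIcc_of_le hab])
      (by fun_prop) (by simpa [hab] using hderiv)
      (fun x _ ↦ (hasDerivAt_id' x).sub_const m) hf' intervalIntegrable_const
  have hmean : ∫ s in a..b, f' m * (s - m) = 0 := by
    rw [intervalIntegral.integral_const_mul, intervalIntegral.integral_comp_sub_right (fun x ↦ x),
      integral_id]
    ring
  rw [trapezoidal_error, trapezoidal_integral_one]
  simp_rw [sub_mul]
  rw [intervalIntegral.integral_sub (hf'.mul_continuousOn (by fun_prop))
    (Continuous.intervalIntegrable (by fun_prop) a b), hmean]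
  simp only [mul_one] at hparts
  rw [hparts]
  simp only [m]
  ring

theorem abs_trapezoidal_error_one_le_of_lipschitzOnWith {f f' : ℝ → ℝ} {a b : ℝ} {K : ℝ≥0}
    (hab : a ≤ b) (hf : ContinuousOn f (Icc a b))
    (hderiv : ∀ x ∈ Ioo a b, HasDerivAt f (f' x) x) (hf' : LipschitzOnWith K f' (Icc a b)) :
    |trapezoidal_error f 1 a b| ≤ K * (b - a) ^ 3 / 4 := by
  have hm : (a + b) / 2 ∈ Icc a b := ⟨by linarith, by linarith⟩
  rw [trapezoidal_error_one_eq_integral hab hf hderiv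
    ((hf'.continuousOn).intervalIntegrable_of_Icc hab), ← Real.norm_eq_abs]
  calc _ ≤ K * ((b - a) / 2) * ((b - a) / 2) * |b - a| :=
        intervalIntegral.norm_integral_le_of_norm_le_const fun x hx ↦ ?_
    _ = K * (b - a) ^ 3 / 4 := by rw [abs_of_nonneg (sub_nonneg.mpr hab)]; ring
  · rw [uIoc_of_le hab] at hx
    have hx' : x ∈ Icc a b := Ioc_subset_Icc_self hx
    have hdist : |x - (a + b) / 2| ≤ (b - a) / 2 :=
      abs_le.mpr ⟨by linarith [hx'.1], by linarith [hx'.2]⟩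
    have hlip := hf'.dist_le_mul x hx' _ hm
    rw [Real.dist_eq, Real.dist_eq] at hlip
    rw [norm_mul, Real.norm_eq_abs, Real.norm_eq_abs]
    exact mul_le_mul (hlip.trans (by gcongr)) hdist (abs_nonneg _) (by positivity)

theorem abs_trapezoidal_error_le_of_lipschitzOnWith {f f' : ℝ → ℝ} {a b : ℝ} {K : ℝ≥0}
    (hab : a ≤ b) (hf : ContinuousOn f (Icc a b))
    (hderiv : ∀ x ∈ Ioo a b, HasDerivAt f (f' x) x) (hf' : LipschitzOnWith K f' (Icc a b)) {N : ℕ} (hN : 0 < N) :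
    |trapezoidal_error f N a b| ≤ K * (b - a) ^ 3 / (4 * N ^ 2) := by
  set h := (b - a) / N
  have hh : 0 ≤ h := div_nonneg (sub_nonneg.mpr hab) N.cast_nonneg
  have hb : b = a + N * h := by simp only [h]; field_simp; ring
  have hnode : ∀ k : ℕ, k ≤ N → a + k * h ∈ Icc a b := fun k hk ↦
    ⟨le_add_of_nonneg_right (mul_nonneg k.cast_nonneg hh), by rw [hb]; gcongr⟩
  rw [hb, ← sum_trapezoidal_error_adjacent_intervals hN
    (hb ▸ hf.intervalIntegrable_of_Icc hab), ← hb]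
  refine (Finset.abs_sum_le_sum_abs _ _).trans ?_
  calc _ ≤ ∑ _k ∈ Finset.range N, K * h ^ 3 / 4 := Finset.sum_le_sum fun k hk ↦ by
        have hk := Finset.mem_range.mp hk
        have hlo : a ≤ a + k * h := (hnode k hk.le).1
        have hhi : a + (k + 1) * h ≤ b := by exact_mod_cast (hnode (k + 1) hk).2
        have hsub : Icc (a + k * h) (a + (k + 1) * h) ⊆ Icc a b := Icc_subset_Icc hlo hhi
        have hstep : a + (k + 1) * h - (a + k * h) = h := by ring
        have := abs_trapezoidal_error_one_le_of_lipschitzOnWith (by linarith)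
          (hf.mono hsub) (fun x hx ↦ hderiv x (Ioo_subset_Ioo hlo hhi hx))
          (hf'.mono hsub)
        rwa [hstep] at this
    _ = K * (b - a) ^ 3 / (4 * N ^ 2) := by
        simp only [Finset.sum_const, Finset.card_range, nsmul_eq_mul, h]
        field_simp

theorem sum_trapWeight_eq_trapezoidal_integral (f : ℝ → ℝ) {N : ℕ} (hN : 0 < N) :
    ∑ j ∈ Finset.range (N + 1), 1 / (N : ℝ) * trapWeight N j * f (j / N) =
      trapezoidal_integral f N 0 1 := by
  obtain ⟨n, rfl⟩ : ∃ n, N = n + 1 := ⟨N - 1, by omega⟩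
  have hinner : ∀ k ∈ Finset.range n, trapWeight (n + 1) (k + 1) = 1 := fun k hk ↦ by
    simp [trapWeight, (Finset.mem_range.mp hk).ne]
  have hfirst : trapWeight (n + 1) 0 = 1 / 2 := if_pos (.inl rfl)
  have hlast : trapWeight (n + 1) (n + 1) = 1 / 2 := if_pos (.inr rfl)
  rw [Finset.sum_range_succ, Finset.sum_range_succ', Finset.sum_congr rfl fun k hk ↦ by
    rw [hinner k hk], hfirst, hlast, trapezoidal_integral, Nat.add_sub_cancel,
    div_self (by positivity)]
  push_cast
  simp only [zero_div, zero_add, sub_zero, mul_one, mul_add, Finset.mul_sum]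
  ring

noncomputable def G01Deriv (ξ s : ℝ) : ℝ := ξ ^ 2 / 2 + min (s - ξ) 0

theorem continuous_G01 (ξ : ℝ) : Continuous (G01 ξ) :=
  Continuous.if_le (by fun_prop) (by fun_prop) continuous_id continuous_const
    fun s hs ↦ by rw [hs]; ring

theorem hasDerivAt_G01 (ξ s : ℝ) : HasDerivAt (G01 ξ) (G01Deriv ξ s) s := by
  -- Away from `s = ξ` the kernel is locally one of its two polynomial branches; at the corner
  -- `s = ξ` the derivative follows from the continuity of `G01Deriv ξ`.
  refine hasDerivAt_of_hasDerivAt_of_ne' (x := ξ) (fun s hs ↦ ?_) (continuous_G01 ξ).continuousAt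
    (by unfold G01Deriv; fun_prop) s
  rcases hs.lt_or_gt with hlt | hgt
  · have hloc : (fun s ↦ s / 2 * (ξ ^ 2 - 2 * ξ + s)) =ᶠ[nhds s] G01 ξ := by
      filter_upwards [Iio_mem_nhds hlt] with r hr
      simp [G01, le_of_lt (mem_Iio.mp hr)]
    have : HasDerivAt (fun s ↦ s / 2 * (ξ ^ 2 - 2 * ξ + s)) (G01Deriv ξ s) s := by
      rw [G01Deriv, min_eq_left (by linarith)]
      exact (((hasDerivAt_id' s).div_const 2).mul
        ((hasDerivAt_id' s).const_add (ξ ^ 2 - 2 * ξ))).congr_deriv (by ring)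
    exact this.congr_of_eventuallyEq hloc.symm
  · have hloc : (fun s ↦ ξ ^ 2 / 2 * (s - 1)) =ᶠ[nhds s] G01 ξ := by
      filter_upwards [Ioi_mem_nhds hgt] with r hr
      simp [G01, not_le.mpr (mem_Ioi.mp hr)]
    have : HasDerivAt (fun s ↦ ξ ^ 2 / 2 * (s - 1)) (G01Deriv ξ s) s := by
      rw [G01Deriv, min_eq_right (by linarith)]
      exact (((hasDerivAt_id' s).sub_const 1).const_mul (ξ ^ 2 / 2)).congr_deriv (by ring)
    exact this.congr_of_eventuallyEq hloc.symm

theorem lipschitzWith_G01Deriv (ξ : ℝ) : LipschitzWith 1 (G01Deriv ξ) := by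
  show LipschitzWith 1 fun s ↦ ξ ^ 2 / 2 + min (s - ξ) 0
  simpa using (LipschitzWith.const (ξ ^ 2 / 2)).add
    ((LipschitzWith.id.sub (LipschitzWith.const ξ)).min_const 0)

theorem abs_G01_le_one {ξ s : ℝ} (hξ : ξ ∈ Icc (0:ℝ) 1) (hs : s ∈ Icc (0:ℝ) 1) :
    |G01 ξ s| ≤ 1 := by
  obtain ⟨hξ0, hξ1⟩ := hξ
  obtain ⟨hs0, hs1⟩ := hs
  unfold G01
  split_ifs <;> rw [abs_le] <;> constructor <;> nlinarith [mul_nonneg hs0 hξ0]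

theorem abs_G01Deriv_le_one {ξ s : ℝ} (hξ : ξ ∈ Icc (0:ℝ) 1) (hs : s ∈ Icc (0:ℝ) 1) :
    |G01Deriv ξ s| ≤ 1 := by
  obtain ⟨hξ0, hξ1⟩ := hξ
  have : -1 ≤ min (s - ξ) 0 := le_min (by linarith [hs.1]) (by norm_num)
  rw [G01Deriv, abs_le]
  constructor <;> nlinarith [min_le_right (s - ξ) 0]

theorem lipschitzOnWith_G01 {ξ : ℝ} (hξ : ξ ∈ Icc (0:ℝ) 1) :
    LipschitzOnWith 1 (G01 ξ) (Icc 0 1) :=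
  (convex_Icc 0 1).lipschitzOnWith_of_nnnorm_hasDerivWithin_le
    (fun s _ ↦ (hasDerivAt_G01 ξ s).hasDerivWithinAt)
    fun s hs ↦ by
      rw [← NNReal.coe_le_coe, coe_nnnorm, Real.norm_eq_abs]
      exact abs_G01Deriv_le_one hξ hs

theorem exists_lipschitzOnWith_G01Deriv_mul_add {ψ : ℝ → ℝ} (hψ : ContDiffOn ℝ 2 ψ (Icc 0 1)) :
    ∃ L : ℝ≥0, ∀ ξ ∈ Icc (0:ℝ) 1, LipschitzOnWith L
      (fun s ↦ G01Deriv ξ s * ψ s + G01 ξ s * derivWithin ψ (Icc 0 1) s) (Icc 0 1) := by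
  have hψ' : ContDiffOn ℝ 1 (derivWithin ψ (Icc 0 1)) (Icc 0 1) :=
    hψ.derivWithin (uniqueDiffOn_Icc zero_lt_one) (by norm_num)
  have bound : ∀ {g : ℝ → ℝ}, ContinuousOn g (Icc 0 1) → ∃ B : ℝ≥0, ∀ x ∈ Icc (0:ℝ) 1, ‖g x‖ ≤ B :=
    fun hg ↦
      let ⟨B, hB⟩ := isCompact_Icc.exists_bound_of_continuousOn hg
      ⟨B.toNNReal, fun x hx ↦ (hB x hx).trans (Real.le_coe_toNNReal B)⟩
  obtain ⟨K₀, hK₀⟩ := hψ.exists_lipschitzOnWith two_ne_zero (convex_Icc 0 1) isCompact_Icc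
  obtain ⟨K₁, hK₁⟩ := hψ'.exists_lipschitzOnWith one_ne_zero (convex_Icc 0 1) isCompact_Icc
  obtain ⟨B₀, hB₀⟩ := bound hψ.continuousOn
  obtain ⟨B₁, hB₁⟩ := bound hψ'.continuousOn
  refine ⟨(1 * K₀ + 1 * B₀) + (1 * K₁ + 1 * B₁), fun ξ hξ ↦ ?_⟩
  have hG : ∀ s ∈ Icc (0:ℝ) 1, ‖G01 ξ s‖ ≤ (1 : ℝ≥0) := fun s hs ↦ by
    simpa using abs_G01_le_one hξ hs
  have hG' : ∀ s ∈ Icc (0:ℝ) 1, ‖G01Deriv ξ s‖ ≤ (1 : ℝ≥0) := fun s hs ↦ by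
    simpa using abs_G01Deriv_le_one hξ hs
  exact ((lipschitzWith_G01Deriv ξ).lipschitzOnWith.mul_of_norm_le hK₀ hG' hB₀).add
    ((lipschitzOnWith_G01 hξ).mul_of_norm_le hK₁ hG hB₁)

/-- For twice continuously differentiable `ψ` on `[0,1]`, the composite trapezoidal rule
applied to `s ↦ G(ξ, s) ψ(s)` has error `O(h²)` uniformly in `N` and in `ξ ∈ [0,1]`. -/
theorem trapezoidal_rule_green_kernel_at_any_point
    (ψ : ℝ → ℝ) (hψ : ContDiffOn ℝ 2 ψ (Icc 0 1)) :
    ∃ C > (0:ℝ), ∀ N : ℕ, 1 ≤ N → ∀ ξ ∈ Icc (0:ℝ) 1,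
      |(∫ s in (0:ℝ)..1, G01 ξ s * ψ s)
          - ∑ j ∈ Finset.range (N + 1),
              (1 / (N:ℝ)) * trapWeight N j * G01 ξ ((j : ℝ) / N) * ψ ((j : ℝ) / N)|
        ≤ C * (1 / (N:ℝ)) ^ 2 := by
  obtain ⟨L, hL⟩ := exists_lipschitzOnWith_G01Deriv_mul_add hψ
  refine ⟨(L : ℝ) / 4 + 1, by positivity, fun N hN ξ hξ ↦ ?_⟩
  have hderiv : ∀ s ∈ Ioo (0:ℝ) 1, HasDerivAt (fun s ↦ G01 ξ s * ψ s)
      (G01Deriv ξ s * ψ s + G01 ξ s * derivWithin ψ (Icc 0 1) s) s := fun s hs ↦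
    (hasDerivAt_G01 ξ s).mul ((hψ.differentiableOn two_ne_zero s
      (Ioo_subset_Icc_self hs)).hasDerivWithinAt.hasDerivAt (Icc_mem_nhds hs.1 hs.2))
  have herr := abs_trapezoidal_error_le_of_lipschitzOnWith zero_le_one
    ((continuous_G01 ξ).continuousOn.mul hψ.continuousOn) hderiv (hL ξ hξ) hN
  have hsum := sum_trapWeight_eq_trapezoidal_integral (fun s ↦ G01 ξ s * ψ s) hN
  simp only [← mul_assoc] at hsum
  rw [hsum, abs_sub_comm]
  calc _ ≤ (L : ℝ) * (1 - 0) ^ 3 / (4 * N ^ 2) := herr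
    _ = L / 4 * (1 / (N:ℝ)) ^ 2 := by ring
    _ ≤ (L / 4 + 1) * (1 / (N:ℝ)) ^ 2 := by gcongr; linarith
end
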